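/- (Fixed point alternative of Diaz–Margolis.) Let (Ω, d) be a complete generalized metric space (a complete extended metric space, with d taking values in [0, ∞]) and let T : Ω → Ω be strictly contractive with Lipschitz constant L < 1, i.e. d(T x, T y) ≤ L · d(x, y) for all x, y ∈ Ω. Then for each x ∈ Ω, either d(T^m x, T^{m+1} x) = ∞ for all m ≥ 0, or there exists a natural number m₀ such that: d(T^m x, T^{m+1} x) < ∞ for all m ≥ m₀; the sequence (T^m x) converges to a fixed point y* of T; y* is the unique fixed point of T in the set Λ = {y ∈ Ω : d(T^{m₀} x, y) < ∞}; and d(y, y*) ≤ (1/(1 − L)) d(y, T y) for all y ∈ Λ. -/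
import Mathlib


open Filter
open scoped NNReal ENNReal

/-- The fixed point alternative of Diaz–Margolis: for a strictly contractive map `T`
(with Lipschitz constant `L < 1`) on a complete generalized metric space, for each `x`
either `d(Tᵐx, Tᵐ⁺¹x) = ∞` for every `m`, or there is `m₀` such that
`d(Tᵐx, Tᵐ⁺¹x) < ∞` for all `m ≥ m₀`, the sequence `Tᵐx` converges to a fixed point `y*`
of `T`, `y*` is the unique fixed point of `T` in `Λ = {y : d(Tᵐ⁰x, y) < ∞}`, and
`d(y, y*) ≤ (1/(1 − L)) d(y, Ty)` for all `y ∈ Λ`. -/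
theorem fixed_point_alternative
    {Ω : Type*} [EMetricSpace Ω] [CompleteSpace Ω]
    (T : Ω → Ω) (L : ℝ) (hL0 : 0 ≤ L) (hL1 : L < 1)
    (hT : ∀ x y : Ω, edist (T x) (T y) ≤ ENNReal.ofReal L * edist x y)
    (x : Ω) :
    (∀ m : ℕ, edist (T^[m] x) (T^[m + 1] x) = ⊤) ∨
    ∃ m₀ : ℕ,
      (∀ m : ℕ, m₀ ≤ m → edist (T^[m] x) (T^[m + 1] x) < ⊤) ∧
      ∃ ystar : Ω,
        Tendsto (fun m : ℕ => T^[m] x) atTop (nhds ystar) ∧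
        T ystar = ystar ∧
        (∀ y : Ω, edist (T^[m₀] x) y < ⊤ → T y = y → y = ystar) ∧
        (∀ y : Ω, edist (T^[m₀] x) y < ⊤ →
          edist y ystar ≤ ENNReal.ofReal (1 / (1 - L)) * edist y (T y)) := by
  set K : ℝ≥0 := Real.toNNReal L with hK
  have hKL : ENNReal.ofReal L = (K : ℝ≥0∞) := rfl
  have hf : ContractingWith K T := by
    constructor
    · rw [hK]; exact Real.toNNReal_lt_one.2 hL1
    · intro a b
      simpa [hKL, ENNReal.coe_mul] using hT a b
  by_cases hall : ∀ m : ℕ, edist (T^[m] x) (T^[m + 1] x) = ⊤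
  · exact Or.inl hall
  · push_neg at hall
    obtain ⟨m₀, hm₀⟩ := hall
    refine Or.inr ⟨m₀, ?_, ?_⟩
    · intro m hm
      obtain ⟨k, rfl⟩ := Nat.exists_eq_add_of_le hm
      induction k with
      | zero => simpa using lt_top_iff_ne_top.2 hm₀
      | succ n ih =>
        have h1 : edist (T^[m₀ + (n + 1)] x) (T^[m₀ + (n + 1) + 1] x)
            ≤ (K : ℝ≥0∞) * edist (T^[m₀ + n] x) (T^[m₀ + n + 1] x) := by
          have h2 := hT (T^[m₀ + n] x) (T^[m₀ + n + 1] x)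
          rw [hKL] at h2
          conv_lhs => rw [show m₀ + (n + 1) = (m₀ + n) + 1 from rfl,
            Function.iterate_succ_apply' T (m₀ + n) x,
            Function.iterate_succ_apply' T (m₀ + n + 1) x]
          exact h2
        exact lt_of_le_of_lt h1 (ENNReal.mul_lt_top ENNReal.coe_lt_top (ih (Nat.le_add_right _ _)))
    · set z := T^[m₀] x with hz
      have hzz : edist z (T z) ≠ ⊤ := by
        simpa [hz, ← Function.iterate_succ_apply' T] using hm₀
      refine ⟨ContractingWith.efixedPoint T hf z hzz, ?_, ?_, ?_, ?_⟩
      · have h1 := hf.tendsto_iterate_efixedPoint hzz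
        have h2 : (fun n : ℕ => T^[n] z) = fun n : ℕ => T^[n + m₀] x := by
          funext n; rw [hz, ← Function.iterate_add_apply]
        rw [h2] at h1
        exact (tendsto_add_atTop_iff_nat m₀).mp h1
      · exact hf.efixedPoint_isFixedPt hzz
      · intro y hy hfy
        have h1 : edist y (ContractingWith.efixedPoint T hf z hzz) < ⊤ := by
          calc edist y (ContractingWith.efixedPoint T hf z hzz)
              ≤ edist y z + edist z (ContractingWith.efixedPoint T hf z hzz) :=
                edist_triangle _ _ _
            _ < ⊤ := ENNReal.add_lt_top.2
                ⟨by rwa [edist_comm], hf.edist_efixedPoint_lt_top hzz⟩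
        rcases hf.eq_or_edist_eq_top_of_fixedPoints hfy (hf.efixedPoint_isFixedPt hzz) with h | h
        · exact h
        · exact absurd h h1.ne
      · intro y hy
        have h1 : edist y (ContractingWith.efixedPoint T hf z hzz)
            ≤ edist y (T y) / (1 - (K : ℝ≥0∞)) := by
          have hy' : edist z y ≠ ⊤ := hy.ne
          have := hf.efixedPoint_eq_of_edist_lt_top hzz (y := y)
          rcases eq_or_ne (edist y (T y)) ⊤ with htop | hfin
          · rw [htop, ENNReal.top_div_of_ne_top]
            · exact le_top
            · exact ContractingWith.one_sub_K_ne_top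
          · rw [this hfin hy']
            exact hf.edist_efixedPoint_le hfin
        refine h1.trans (le_of_eq ?_)
        rw [ENNReal.div_eq_inv_mul]
        congr 1
        rw [one_div, ← ENNReal.ofReal_one, ← hKL, ← ENNReal.ofReal_sub _ hL0,
          ENNReal.ofReal_inv_of_pos (by linarith)]
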